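/- arXiv:2006.11152 — 2 statements merged into one kernel-verified Lean document; each statement's English description precedes it below -/
import Mathlib

section
/- Common equivalence is not transitive: there exist formulae A, B, C with A ≡≡ B and B ≡≡ C but not A ≡≡ C. Concretely, for distinct variables x and y, this holds for A = {{x},{y}}, B = {{x}}, and C = {{x},{¬y}}. -/
/-- A literal is a variable with a polarity (`true` = positive). A clause is a
finite set of literals. -/
abbrev Clause (V : Type) := Finset (V × Bool)

/-- A formula is a (finite) set of clauses, read as a conjunction of disjunctions. -/
abbrev Formula (V : Type) := Finset (Clause V)

variable {V : Type} [DecidableEq V]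

/-- An assignment satisfies a clause if it makes some literal of it true. -/
def clauseSat (a : V → Bool) (c : Clause V) : Prop := ∃ l ∈ c, a l.1 = l.2

/-- An assignment satisfies a formula if it satisfies all its clauses. -/
def satF (a : V → Bool) (F : Formula V) : Prop := ∀ c ∈ F, clauseSat a c

/-- Entailment: every model of `A` is a model of `B`. -/
def entails (A B : Formula V) : Prop := ∀ a : V → Bool, satF a A → satF a B

/-- Satisfiability. -/
def satisfiable (F : Formula V) : Prop := ∃ a : V → Bool, satF a F

/-- The set of variables occurring (positively or negatively) in a formula. -/
def vars (F : Formula V) : Set V := {v | ∃ c ∈ F, ∃ b : Bool, (v, b) ∈ c}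

/-- Common equivalence: same consequences on the common variables. -/
def commonEquiv (A B : Formula V) : Prop :=
  ∀ C : Formula V, vars C ⊆ vars A ∩ vars B → (entails A C ↔ entails B C)

/-- An assignment satisfies a set of literals (viewed as unit clauses). -/
def satLits (a : V → Bool) (S : Set (V × Bool)) : Prop := ∀ l ∈ S, a l.1 = l.2

/-- A clause is Horn if it has at most one positive literal. -/
def hornClause (c : Clause V) : Prop := (c.filter (fun l => l.2 = true)).card ≤ 1

/-- A formula is Horn if all its clauses are. -/
def hornFormula (F : Formula V) : Prop := ∀ c ∈ F, hornClause c

/-- A clause is definite Horn if it has exactly one positive literal. -/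
def definiteClause (c : Clause V) : Prop := (c.filter (fun l => l.2 = true)).card = 1

/-- A formula is definite Horn if all its clauses are. -/
def definiteHorn (F : Formula V) : Prop := ∀ c ∈ F, definiteClause c

/-- The size of a formula: total number of literal occurrences. -/
def fsize (F : Formula V) : ℕ := ∑ c ∈ F, c.card

/-- The set of variables `P` as a set of positive unit clauses. -/
def unitsOf (P : Finset V) : Formula V := P.image (fun p => ({(p, true)} : Clause V))

/-- The definite Horn clause `P → x`. -/
def dClause (P : Finset V) (x : V) : Clause V :=
  P.image (fun p => ((p, false) : V × Bool)) ∪ {(x, true)}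

/-- `F ⊨ P`: the formula entails every variable of `P`. -/
def entailsV (F : Formula V) (P : Finset V) : Prop := entails F (unitsOf P)

/-- A definite Horn formula is single-head if no two distinct clauses share a head. -/
def singleHead (F : Formula V) : Prop :=
  ∀ (P P' : Finset V) (x : V), x ∉ P → x ∉ P' →
    dClause P x ∈ F → dClause P' x ∈ F → P = P'

/-- The body of a clause: its negated variables. -/
def body (c : Clause V) : Finset V := (c.filter (fun l => l.2 = false)).image Prod.fst

/-- `F^x`: the clauses of `F` containing neither `x` nor `¬x`. -/
def restr (F : Formula V) (x : V) : Formula V :=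
  F.filter (fun c => ((x, true) : V × Bool) ∉ c ∧ ((x, false) : V × Bool) ∉ c)

/-- `F[⊥/x]`: delete the clauses containing `¬x`, remove the literal `x` elsewhere. -/
def substFalse (F : Formula V) (x : V) : Formula V :=
  (F.filter (fun c => ((x, false) : V × Bool) ∉ c)).image (fun c => c.erase (x, true))

/-- `newvar P x F`: summarize the body part `P` by the new variable `x`. -/
def newvar (P : Finset V) (x : V) (F : Formula V) : Formula V :=
  ((F.filter (fun c => ∀ p ∈ P, ((p, false) : V × Bool) ∈ c)).image
      (fun c => (c \ P.image (fun p => ((p, false) : V × Bool))) ∪ {((x, false) : V × Bool)}))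
    ∪ (F.filter (fun c => ¬ ∀ p ∈ P, ((p, false) : V × Bool) ∈ c))
    ∪ {dClause P x}

lemma satF_congr' (a a' : V → Bool) (F : Formula V)
    (h : ∀ v ∈ vars F, a v = a' v) : satF a F → satF a' F := by
  intro hs c hc
  obtain ⟨l, hl, hal⟩ := hs c hc
  exact ⟨l, hl, by rw [← h l.1 ⟨c, hc, l.2, by simpa using hl⟩]; exact hal⟩

/-- common equivalence is not transitive: with `A = {{x},{y}}`,
`B = {{x}}`, `C = {{x},{¬y}}`, we have `A ≡≡ B` and `B ≡≡ C` but not `A ≡≡ C`. -/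
theorem commonEquiv_not_trans (x y : V) (hxy : x ≠ y) :
    commonEquiv ({{((x, true) : V × Bool)}, {((y, true) : V × Bool)}} : Formula V)
        ({{((x, true) : V × Bool)}} : Formula V) ∧
    commonEquiv ({{((x, true) : V × Bool)}} : Formula V)
        ({{((x, true) : V × Bool)}, {((y, false) : V × Bool)}} : Formula V) ∧
    ¬ commonEquiv ({{((x, true) : V × Bool)}, {((y, true) : V × Bool)}} : Formula V)
        ({{((x, true) : V × Bool)}, {((y, false) : V × Bool)}} : Formula V) := by
  set A : Formula V := {{((x, true) : V × Bool)}, {((y, true) : V × Bool)}} with hA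
  set B : Formula V := {{((x, true) : V × Bool)}} with hB
  set C : Formula V := {{((x, true) : V × Bool)}, {((y, false) : V × Bool)}} with hC
  have varsB : vars B = {x} := by
    ext v; simp [vars, hB, eq_comm]
  have key : ∀ (D : Formula V), vars D ⊆ {x} →
      ∀ (b : Bool) (a : V → Bool), satF a D ↔ satF (Function.update a y b) D := by
    intro D hD b a
    have hagree : ∀ v ∈ vars D, a v = Function.update a y b v := by
      intro v hv
      have hvx : v = x := hD hv
      subst hvx
      rw [Function.update_of_ne hxy]
    exact ⟨satF_congr' _ _ _ hagree, satF_congr' _ _ _ (fun v hv => (hagree v hv).symm)⟩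
  refine ⟨?_, ?_, ?_⟩
  · intro D hD
    have hDx : vars D ⊆ {x} := fun v hv => varsB ▸ (hD hv).2
    constructor
    · intro h a ha
      have hax : a x = true := by
        have := ha {((x, true) : V × Bool)} (by simp [hB])
        simpa [clauseSat] using this
      set a' := Function.update a y true with ha'
      have hA' : satF a' A := by
        intro c hc
        simp [hA] at hc
        rcases hc with rfl | rfl
        · exact ⟨(x, true), by simp, by simp [ha', Function.update_of_ne hxy, hax]⟩
        · exact ⟨(y, true), by simp, by simp [ha']⟩
      exact (key D hDx true a).mpr (h a' hA')
    · intro h a ha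
      apply h
      intro c hc
      apply ha
      simp [hA, hB] at hc ⊢
      exact Or.inl hc
  · intro D hD
    have hDx : vars D ⊆ {x} := fun v hv => varsB ▸ (hD hv).1
    constructor
    · intro h a ha
      apply h
      intro c hc
      apply ha
      simp [hC, hB] at hc ⊢
      exact Or.inl hc
    · intro h a ha
      have hax : a x = true := by
        have := ha {((x, true) : V × Bool)} (by simp [hB])
        simpa [clauseSat] using this
      set a' := Function.update a y false with ha'
      have hC' : satF a' C := by
        intro c hc
        simp [hC] at hc
        rcases hc with rfl | rfl
        · exact ⟨(x, true), by simp, by simp [ha', Function.update_of_ne hxy, hax]⟩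
        · exact ⟨(y, false), by simp, by simp [ha']⟩
      exact (key D hDx false a).mpr (h a' hC')
  · intro h
    have hsub : vars A ⊆ vars A ∩ vars C := by
      intro v hv
      refine ⟨hv, ?_⟩
      simp [vars, hA, Prod.ext_iff] at hv
      simp [vars, hC, Prod.ext_iff]
      aesop
    have hCA : entails C A := (h A hsub).mp (fun a ha => ha)
    set a : V → Bool := fun v => decide (v = x) with haa
    have haC : satF a C := by
      intro c hc
      simp [hC] at hc
      rcases hc with rfl | rfl
      · exact ⟨(x, true), by simp, by simp [haa]⟩
      · exact ⟨(y, false), by simp, by simp [haa, hxy.symm]⟩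
    have haA := hCA a haC {((y, true) : V × Bool)} (by simp [hA])
    have : a y = true := by simpa [clauseSat] using haA
    simp [haa, hxy.symm] at this
end

section
/- If F is an inequivalent definite Horn formula, then for every clause A → x in MIN(F), F contains a clause B → x with A ⊆ B. -/
variable {V : Type} [DecidableEq V]

/-- A formula is inequivalent if `F ⊨ A ≡ B` implies `F ⊨ A ≡ A ∩ B`. -/
def inequivalent (F : Formula V) : Prop :=
  ∀ A B : Finset V,
    entailsV (F ∪ unitsOf A) B → entailsV (F ∪ unitsOf B) A →
    entailsV (F ∪ unitsOf (A ∩ B)) A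

section Aux

lemma mem_body_iff (c : Clause V) (p : V) : p ∈ body c ↔ (p, false) ∈ c := by
  simp only [body, Finset.mem_image, Finset.mem_filter]
  constructor
  · rintro ⟨⟨q, b⟩, ⟨hc, hb⟩, rfl⟩
    simp only at hb; subst hb; exact hc
  · intro h; exact ⟨(p, false), ⟨h, rfl⟩, rfl⟩

lemma pos_unique {c : Clause V} (hc : definiteClause c) {x y : V}
    (hx : (x, true) ∈ c) (hy : (y, true) ∈ c) : x = y := by
  obtain ⟨l, hl⟩ := Finset.card_eq_one.mp hc
  have h1 : ((x, true) : V × Bool) ∈ c.filter (fun l => l.2 = true) := by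
    simp [Finset.mem_filter, hx]
  have h2 : ((y, true) : V × Bool) ∈ c.filter (fun l => l.2 = true) := by
    simp [Finset.mem_filter, hy]
  rw [hl, Finset.mem_singleton] at h1 h2
  have := h1.trans h2.symm
  exact congrArg Prod.fst this

lemma exists_head {c : Clause V} (hc : definiteClause c) : ∃ y, (y, true) ∈ c := by
  obtain ⟨l, hl⟩ := Finset.card_eq_one.mp hc
  have : l ∈ c.filter (fun l => l.2 = true) := by rw [hl]; simp
  rw [Finset.mem_filter] at this
  exact ⟨l.1, by rw [show ((l.1, true) : V × Bool) = l from Prod.ext rfl this.2.symm]; exact this.1⟩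

lemma head_fire {c : Clause V} (hc : definiteClause c) {x : V} (hx : (x, true) ∈ c)
    {b : V → Bool} (hs : clauseSat b c) (hb : ∀ p ∈ body c, b p = true) :
    b x = true := by
  obtain ⟨⟨q, pol⟩, hqc, hq⟩ := hs
  cases pol with
  | false =>
    have : q ∈ body c := (mem_body_iff c q).mpr hqc
    rw [hb q this] at hq; exact absurd hq (by simp)
  | true => rw [pos_unique hc hx hqc]; exact hq

lemma clause_eq_dClause {c : Clause V} (hc : definiteClause c) {x : V}
    (hx : (x, true) ∈ c) : c = dClause (body c) x := by
  ext ⟨q, pol⟩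
  simp only [dClause, Finset.mem_union, Finset.mem_image, Finset.mem_singleton]
  constructor
  · intro h
    cases pol with
    | false => exact Or.inl ⟨q, (mem_body_iff c q).mpr h, rfl⟩
    | true => exact Or.inr (by rw [pos_unique hc h hx])
  · rintro (⟨p, hp, heq⟩ | heq)
    · obtain ⟨rfl, rfl⟩ := Prod.mk.injEq .. ▸ heq.symm
      exact (mem_body_iff c q).mp hp
    · obtain ⟨rfl, rfl⟩ := Prod.mk.injEq .. ▸ heq
      exact hx

lemma satF_union {a : V → Bool} {F G : Formula V} :
    satF a (F ∪ G) ↔ satF a F ∧ satF a G := by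
  simp [satF, Finset.mem_union, or_imp, forall_and]

lemma satF_unitsOf {a : V → Bool} {P : Finset V} :
    satF a (unitsOf P) ↔ ∀ p ∈ P, a p = true := by
  simp [satF, unitsOf, clauseSat]

/-- Forward-chaining derivability from `F` and the positive facts `A`. -/
inductive Deriv (F : Formula V) (A : Finset V) : V → Prop
  | mem {v : V} : v ∈ A → Deriv F A v
  | step {c : Clause V} {y : V} : c ∈ F → (y, true) ∈ c →
      (∀ p ∈ body c, Deriv F A p) → Deriv F A y

lemma deriv_sound {F : Formula V} (hF : definiteHorn F) {A : Finset V}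
    {b : V → Bool} (hbF : satF b F) (hbA : ∀ p ∈ A, b p = true)
    {v : V} (hd : Deriv F A v) : b v = true := by
  induction hd with
  | mem h => exact hbA _ h
  | step hc hy hb ih =>
    exact head_fire (hF _ hc) hy (hbF _ hc) (fun p hp => ih p hp)

lemma deriv_extract {F : Formula V} {A : Finset V} {x : V}
    (hd : Deriv F A x) (hxA : x ∉ A) :
    ∃ c ∈ F, (x, true) ∈ c ∧ x ∉ body c ∧ ∀ p ∈ body c, Deriv F A p := by
  revert hxA
  induction hd with
  | mem h => intro hxA; exact absurd h hxA
  | @step c y hc hy hb ih =>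
    intro hyA
    by_cases h : y ∈ body c
    · exact ih y h hyA
    · exact ⟨c, hc, hy, h, hb⟩

open Classical in
/-- The canonical (minimal) model of `F ∪ A`. -/
noncomputable def canon (F : Formula V) (A : Finset V) : V → Bool :=
  fun v => if Deriv F A v then true else false

lemma canon_true_iff {F : Formula V} {A : Finset V} {v : V} :
    canon F A v = true ↔ Deriv F A v := by
  classical
  simp only [canon]
  split <;> simp_all

lemma canon_satF {F : Formula V} (hF : definiteHorn F) (A : Finset V) :
    satF (canon F A) F := by
  intro c hc
  by_cases h : ∀ p ∈ body c, Deriv F A p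
  · obtain ⟨y, hy⟩ := exists_head (hF _ hc)
    exact ⟨(y, true), hy, canon_true_iff.mpr (Deriv.step hc hy h)⟩
  · push_neg at h
    obtain ⟨p, hp, hnd⟩ := h
    refine ⟨(p, false), (mem_body_iff c p).mp hp, ?_⟩
    simp only [canon]; classical
    simpa using fun hdd => (hnd hdd).elim

end Aux

/-- if `F` is an inequivalent definite Horn formula then, for
every clause `A → x` of `MIN(F)`, `F` contains a clause `B → x` with `A ⊆ B`.
Membership of `A → x` in `MIN(F)` is stated by its definition: `F ⊨ A → x` and
no `B` with `x ∉ B`, `F ⊨ B → x` and either `B <_F A` or `B ⊊ A`. -/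
theorem inequivalent_superset (F : Formula V) (hF : definiteHorn F)
    (hineq : inequivalent F)
    (A : Finset V) (x : V) (hxA : x ∉ A)
    (hent : entails F {dClause A x})
    (hmin : ¬ ∃ B : Finset V, x ∉ B ∧ entails F {dClause B x} ∧
        ((entailsV (F ∪ unitsOf A) B ∧ ¬ entailsV (F ∪ unitsOf B) A) ∨ B ⊂ A)) :
    ∃ B : Finset V, x ∉ B ∧ A ⊆ B ∧ dClause B x ∈ F := by
  classical
  -- Step 1: the canonical model of F ∪ A satisfies F and A, hence x is derivable.
  have hcanonF : satF (canon F A) F := canon_satF hF A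
  have hDx : Deriv F A x := by
    have hsat := hent (canon F A) hcanonF (dClause A x) (Finset.mem_singleton_self _)
    obtain ⟨⟨q, pol⟩, hqc, hq⟩ := hsat
    simp only [dClause, Finset.mem_union, Finset.mem_image, Finset.mem_singleton] at hqc
    rcases hqc with ⟨p, hp, heq⟩ | heq
    · exfalso
      injection heq with h1 h2
      have hq' : canon F A q = true := canon_true_iff.mpr (Deriv.mem (h1 ▸ hp))
      rw [hq', ← h2] at hq
      simp at hq
    · injection heq with h1 h2
      subst h1; subst h2
      exact canon_true_iff.mp hq
  -- Step 2: extract a clause of F with head x whose body avoids x and is derivable.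
  obtain ⟨c, hcF, hxc, hxb, hbd⟩ := deriv_extract hDx hxA
  set B : Finset V := body c with hB
  have hceq : c = dClause B x := clause_eq_dClause (hF _ hcF) hxc
  -- F ∪ A ⊨ B
  have hBA : entailsV (F ∪ unitsOf A) B := by
    intro b hb
    rw [satF_union] at hb
    rw [satF_unitsOf]
    intro p hp
    exact deriv_sound hF hb.1 (satF_unitsOf.mp hb.2) (hbd p hp)
  -- F entails B → x  (since the clause is in F)
  have hentB : entails F {dClause B x} := by
    intro b hbF d hd
    rw [Finset.mem_singleton] at hd
    subst hd
    exact hceq ▸ hbF c hcF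
  -- From minimality: F ∪ B ⊨ A and ¬ (B ⊂ A)
  push_neg at hmin
  have hspec := hmin B hxb hentB
  have hAB : entailsV (F ∪ unitsOf B) A := hspec.1 hBA
  -- Inequivalence: F ∪ (A ∩ B) ⊨ A
  have hIA : entailsV (F ∪ unitsOf (A ∩ B)) A := hineq A B hBA hAB
  -- F entails (A ∩ B) → x
  have hentAB : entails F {dClause (A ∩ B) x} := by
    intro b hbF d hd
    rw [Finset.mem_singleton] at hd
    subst hd
    by_cases h : ∀ p ∈ A ∩ B, b p = true
    · have hbAB : satF b (F ∪ unitsOf (A ∩ B)) :=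
        satF_union.mpr ⟨hbF, satF_unitsOf.mpr h⟩
      have hbA : ∀ p ∈ A, b p = true := satF_unitsOf.mp (hIA b hbAB)
      have hbB : ∀ p ∈ B, b p = true := by
        have := hBA b (satF_union.mpr ⟨hbF, satF_unitsOf.mpr hbA⟩)
        exact satF_unitsOf.mp this
      have hbx : b x = true := head_fire (hF _ hcF) hxc (hbF c hcF) hbB
      exact ⟨(x, true), by
        simp [dClause], hbx⟩
    · push_neg at h
      obtain ⟨p, hp, hbp⟩ := h
      refine ⟨(p, false), ?_, by simp [Bool.not_eq_true] at hbp; exact hbp⟩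
      simp only [dClause, Finset.mem_union, Finset.mem_image, Finset.mem_singleton]
      exact Or.inl ⟨p, Finset.mem_inter.mp hp |>.1 |> fun h1 => by
        exact ⟨hp, rfl⟩⟩
  -- Minimality applied to A ∩ B: ¬ (A ∩ B ⊂ A), hence A ⊆ B.
  have hxAB : x ∉ A ∩ B := fun h => hxA (Finset.mem_inter.mp h).1
  have hspec2 := hmin (A ∩ B) hxAB hentAB
  have hns : ¬ (A ∩ B ⊂ A) := hspec2.2
  have hsubAB : A ⊆ B := by
    by_contra h
    apply hns
    rw [Finset.ssubset_iff_subset_ne]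
    refine ⟨Finset.inter_subset_left, fun heq => h ?_⟩
    intro a ha
    have h2 : a ∈ A ∩ B := by rw [heq]; exact ha
    exact (Finset.mem_inter.mp h2).2
  exact ⟨B, hxb, hsubAB, hceq ▸ hcF⟩
end
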